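/- Let Ω ⊆ ℝⁿ be an open set that is star-shaped with respect to the origin, and let X : Ω → ℝⁿ be a continuously differentiable vector field. Define H_X : Ω → ℝ by H_X(x) = ∫₀¹ ⟨X(t·x), x⟩ dt. Then for every x ∈ Ω, ⟨X(x), x⟩ = ⟨∇H_X(x), x⟩. -/

import Mathlib

/-! Differentiating under the integral sign shows that `H_X` is differentiable at `x`, so
`⟪∇H_X x, x⟫` is the derivative of `s ↦ H_X (s • x)` at `s = 1`. The substitution `u = s t` turns
`H_X (s • x)` into `∫ u in 0..s, ⟪X (u • x), x⟫`, whose derivative at `s = 1` is `⟪X x, x⟫` by the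
fundamental theorem of calculus. -/

open RealInnerProductSpace

open Set Filter Topology Interval

section ParametricIntegral

variable {E F : Type*} [NormedAddCommGroup E] [NormedSpace ℝ E]
  [NormedAddCommGroup F] [NormedSpace ℝ F]

/-- By the tube lemma, the partial derivative in the first variable is bounded on `U ×ˢ [[a, b]]`
for a neighbourhood `U` of `x`, which is the domination needed to differentiate under the
integral sign. -/
theorem hasFDerivAt_intervalIntegral_of_contDiffOn {f : E × ℝ → F} {V : Set (E × ℝ)}
    (hV : IsOpen V) (hf : ContDiffOn ℝ 1 f V) {x : E} {a b : ℝ}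
    (hx : ∀ t ∈ [[a, b]], (x, t) ∈ V) :
    HasFDerivAt (fun y => ∫ t in a..b, f (y, t))
      (∫ t in a..b, (fderiv ℝ f (x, t)).comp (ContinuousLinearMap.inl ℝ E ℝ)) x := by
  set g : E × ℝ → E →L[ℝ] F := fun p => (fderiv ℝ f p).comp (ContinuousLinearMap.inl ℝ E ℝ)
  have hg : ContinuousOn g V :=
    (hf.continuousOn_fderiv_of_isOpen hV le_rfl).clm_comp continuousOn_const
  have hKV : {x} ×ˢ [[a, b]] ⊆ V := by
    rintro ⟨y, t⟩ ⟨rfl, ht⟩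
    exact hx t ht
  obtain ⟨M, hM⟩ :=
    (isCompact_singleton.prod isCompact_uIcc).exists_bound_of_continuousOn (hg.mono hKV)
  obtain ⟨U, T, hU, -, hxU, hT, hUT⟩ := generalized_tube_lemma isCompact_singleton
    isCompact_uIcc (hg.isOpen_inter_preimage hV (isOpen_lt continuous_norm continuous_const))
    fun p hp => ⟨hKV hp, (hM p hp).trans_lt (lt_add_one M)⟩
  have hUV : ∀ y ∈ U, ∀ t ∈ [[a, b]], (y, t) ∈ V ∧ ‖g (y, t)‖ < M + 1 :=
    fun y hy t ht => hUT ⟨hy, hT ht⟩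
  have hslice_diff : ∀ y t, (y, t) ∈ V → HasFDerivAt (fun y => f (y, t)) (g (y, t)) y :=
    fun y t h => ((hf.differentiableOn one_ne_zero).differentiableAt
      (hV.mem_nhds h)).hasFDerivAt.comp y (hasFDerivAt_prodMk_left y t)
  have hslice_cont : ∀ y ∈ U, ContinuousOn (fun t => f (y, t)) [[a, b]] := fun y hy =>
    hf.continuousOn.comp (by fun_prop) fun t ht => (hUV y hy t ht).1
  replace hxU : x ∈ U := hxU rfl
  refine intervalIntegral.hasFDerivAt_integral_of_dominated_of_fderiv_le
    (F := fun y t => f (y, t)) (F' := fun y t => g (y, t)) (bound := fun _ => M + 1)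
    (hU.mem_nhds hxU) ?_ ((hslice_cont x hxU).intervalIntegrable) ?_ ?_
    intervalIntegrable_const ?_
  · filter_upwards [hU.mem_nhds hxU] with y hy
    exact ((hslice_cont y hy).mono uIoc_subset_uIcc).aestronglyMeasurable measurableSet_uIoc
  · exact ((hg.comp (by fun_prop) fun t ht => hx t ht).mono
      uIoc_subset_uIcc).aestronglyMeasurable measurableSet_uIoc
  · exact .of_forall fun t ht y hy => (hUV y hy t (uIoc_subset_uIcc ht)).2.le
  · exact .of_forall fun t ht y hy => hslice_diff y t (hUV y hy t (uIoc_subset_uIcc ht)).1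

end ParametricIntegral

section Presnov

variable {E : Type*} [NormedAddCommGroup E] [InnerProductSpace ℝ E]

noncomputable def presnovPotential (X : E → E) (x : E) : ℝ :=
  ∫ t in (0 : ℝ)..1, ⟪X (t • x), x⟫

theorem differentiableAt_presnovPotential {X : E → E} {Ω : Set E} (hΩ : IsOpen Ω)
    (hX : ContDiffOn ℝ 1 X Ω) {x : E} (hx : ∀ t ∈ Icc (0 : ℝ) 1, t • x ∈ Ω) :
    DifferentiableAt ℝ (presnovPotential X) x := by
  have hV : IsOpen ((fun p : E × ℝ => p.2 • p.1) ⁻¹' Ω) := hΩ.preimage (by fun_prop)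
  have hf : ContDiffOn ℝ 1 (fun p : E × ℝ => ⟪X (p.2 • p.1), p.1⟫)
      ((fun p : E × ℝ => p.2 • p.1) ⁻¹' Ω) :=
    (hX.comp (f := fun p : E × ℝ => p.2 • p.1) (by fun_prop) fun _ hp => hp).inner ℝ
      contDiffOn_fst
  exact (hasFDerivAt_intervalIntegral_of_contDiffOn hV hf
    (by simpa [uIcc_of_le zero_le_one] using hx)).differentiableAt

theorem presnovPotential_smul (X : E → E) (x : E) (s : ℝ) :
    presnovPotential X (s • x) = ∫ u in (0 : ℝ)..s, ⟪X (u • x), x⟫ := by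
  rcases eq_or_ne s 0 with rfl | hs
  · simp [presnovPotential]
  have hscale : ∀ t : ℝ, ⟪X (t • s • x), s • x⟫ = s * ⟪X ((s * t) • x), x⟫ := fun t => by
    rw [smul_smul, mul_comm t s, real_inner_smul_right]
  simp only [presnovPotential, hscale, intervalIntegral.integral_const_mul,
    intervalIntegral.integral_comp_mul_left (fun u => ⟪X (u • x), x⟫) hs, mul_zero, mul_one,
    smul_eq_mul, mul_inv_cancel_left₀ hs]

theorem hasDerivAt_presnovPotential_smul_one {X : E → E} {Ω : Set E} (hΩ : IsOpen Ω)
    (hX : ContinuousOn X Ω) {x : E} (hx : ∀ t ∈ Icc (0 : ℝ) 1, t • x ∈ Ω) :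
    HasDerivAt (fun s : ℝ => presnovPotential X (s • x)) ⟪X x, x⟫ 1 := by
  have hS : IsOpen {u : ℝ | u • x ∈ Ω} := hΩ.preimage (by fun_prop)
  have hg : ContinuousOn (fun u : ℝ => ⟪X (u • x), x⟫) {u | u • x ∈ Ω} :=
    (hX.comp (f := fun u : ℝ => u • x) (by fun_prop) fun _ hu => hu).inner continuousOn_const
  have h1 : (1 : ℝ) ∈ {u : ℝ | u • x ∈ Ω} := hx 1 ⟨zero_le_one, le_rfl⟩
  simp_rw [presnovPotential_smul]
  simpa using intervalIntegral.integral_hasDerivAt_right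
    ((hg.mono fun t ht => hx t (by rwa [uIcc_of_le zero_le_one] at ht)).intervalIntegrable)
    (hg.stronglyMeasurableAtFilter hS 1 h1) (hg.continuousAt (hS.mem_nhds h1))

theorem inner_gradient_self_eq_of_hasDerivAt_smul [CompleteSpace E] {H : E → ℝ} {x : E} {d : ℝ}
    (hH : DifferentiableAt ℝ H x) (hd : HasDerivAt (fun s : ℝ => H (s • x)) d 1) :
    ⟪gradient H x, x⟫ = d := by
  have hray : HasDerivAt (fun s : ℝ => s • x) x 1 := by
    simpa using (hasDerivAt_id (1 : ℝ)).smul_const x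
  rw [gradient, InnerProductSpace.toDual_symm_apply]
  exact (hH.hasFDerivAt.comp_hasDerivAt_of_eq 1 hray (one_smul ℝ x).symm).unique hd

end Presnov

/-- On an open set star-shaped with respect to the origin, a `C¹` vector field `X`
satisfies `⟪X x, x⟫ = ⟪∇H_X x, x⟫` where `H_X` is its Presnov potential. -/
theorem inner_eq_inner_gradient_presnov_of_starShaped
    {n : ℕ} (Ω : Set (EuclideanSpace ℝ (Fin n)))
    (hΩopen : IsOpen Ω)
    (hΩstar : ∀ x ∈ Ω, ∀ t ∈ Set.Icc (0:ℝ) 1, t • x ∈ Ω)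
    (X : EuclideanSpace ℝ (Fin n) → EuclideanSpace ℝ (Fin n))
    (hX : ContDiffOn ℝ 1 X Ω)
    (H : EuclideanSpace ℝ (Fin n) → ℝ)
    (hH : ∀ x ∈ Ω, H x = ∫ t in (0:ℝ)..1, ⟪X (t • x), x⟫) :
    ∀ x ∈ Ω, ⟪X x, x⟫ = ⟪gradient H x, x⟫ := by
  intro x hx
  have hH_eq : H =ᶠ[𝓝 x] presnovPotential X := eventually_of_mem (hΩopen.mem_nhds hx) hH
  rw [hH_eq.gradient_eq]
  exact (inner_gradient_self_eq_of_hasDerivAt_smul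
    (differentiableAt_presnovPotential hΩopen hX (hΩstar x hx))
    (hasDerivAt_presnovPotential_smul_one hΩopen hX.continuousOn (hΩstar x hx))).symm
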